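/- arXiv:1212.5008 — 2 statements merged into one kernel-verified Lean document; each statement's English description precedes it below -/
import Mathlib

section
/- Let s_1,t_1,s_2,t_2,s_3,t_3 be nonnegative integers with t_1 ≥ 1, t_2 ≥ 1, t_3 ≥ 1, let n = 3 + Σ_{i=1}^3 (2s_i + t_i), let G = G_3(s_1,t_1; s_2,t_2; s_3,t_3), and let G′ = G_3(0,1; 0,1; Σ_{i=1}^3 s_i, Σ_{i=1}^3 t_i − 2) be the graph obtained from G by moving every pendent edge and pendent path of length 2 attached at u_1 and u_2, except one pendent edge at each of u_1 and u_2, to the vertex u_3. Then φ_i(G) ≥ φ_i(G′) for all 0 ≤ i ≤ n; moreover, if G is not isomorphic to G′, then the inequality is strict for every 2 ≤ i ≤ n−2. -/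
open Polynomial SimpleGraph Matrix

open scoped Classical

/-- The signless Laplacian matrix `Q(G) = D(G) + A(G)` of a simple graph, over `ℝ`. -/
noncomputable def sLap {V : Type*} [Fintype V] (G : SimpleGraph V) : Matrix V V ℝ :=
  Matrix.of fun x y =>
    (if x = y then ((G.neighborSet x).ncard : ℝ) else 0) + (if G.Adj x y then 1 else 0)

/-- The signless Laplacian characteristic polynomial `Q_G(x) = det (xI - Q(G))`. -/
noncomputable def QPoly {V : Type*} [Fintype V] [DecidableEq V] (G : SimpleGraph V) :
    Polynomial ℝ :=
  (sLap G).charpoly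

/-- The signless Laplacian coefficients `φ_i(G)`, defined by
`det(xI − Q(G)) = Σ_{i=0}^n (−1)^i φ_i(G) x^{n−i}`. -/
noncomputable def phi {V : Type*} [Fintype V] [DecidableEq V] (G : SimpleGraph V) (i : ℕ) : ℝ :=
  (-1 : ℝ) ^ i * (QPoly G).coeff (Fintype.card V - i)

/-- A unicyclic graph: connected with as many edges as vertices. -/
def IsUnicyclic {V : Type*} [Fintype V] (G : SimpleGraph V) : Prop :=
  G.Connected ∧ G.edgeSet.ncard = Fintype.card V

/-- A vertex lies on (the unique) cycle of `G`. -/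
def OnCycle {V : Type*} (G : SimpleGraph V) (x : V) : Prop :=
  ∃ (y : V) (p : G.Walk y y), p.IsCycle ∧ x ∈ p.support

/-- The (unique) cycle of `G` has odd length. -/
def HasOddCycle {V : Type*} (G : SimpleGraph V) : Prop :=
  ∃ (x : V) (p : G.Walk x x), p.IsCycle ∧ Odd p.length

/-- The (unique) cycle of `G` has even length. -/
def HasEvenCycle {V : Type*} (G : SimpleGraph V) : Prop :=
  ∃ (x : V) (p : G.Walk x x), p.IsCycle ∧ Even p.length

/-- `M` is a matching of `G`: a set of edges of `G`, pairwise sharing no vertex. -/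
def IsMatchingFinset {V : Type*} (G : SimpleGraph V) (M : Finset (Sym2 V)) : Prop :=
  (∀ e ∈ M, e ∈ G.edgeSet) ∧ ∀ e ∈ M, ∀ f ∈ M, e ≠ f → ∀ x : V, x ∈ e → x ∉ f

/-- `G` has matching number `m`. -/
def HasMatchingNumber {V : Type*} (G : SimpleGraph V) (m : ℕ) : Prop :=
  (∃ M : Finset (Sym2 V), IsMatchingFinset G M ∧ M.card = m) ∧
    ∀ M : Finset (Sym2 V), IsMatchingFinset G M → M.card ≤ m

/-- Every tree attached to the cycle of `G` is a pendent path of length at most 2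
attached at a cycle vertex: every vertex off the cycle is either a pendent vertex
attached to a cycle vertex, the middle vertex of a pendent path of length 2 attached
at a cycle vertex, or the end vertex of such a path. -/
def PendantPathsOnly {V : Type*} (G : SimpleGraph V) : Prop :=
  ∀ x : V, ¬ OnCycle G x →
    ((G.neighborSet x).ncard = 1 ∧ ∃ c, G.Adj x c ∧ OnCycle G c) ∨
    ((G.neighborSet x).ncard = 2 ∧
      ∃ c y, G.Adj x c ∧ OnCycle G c ∧ G.Adj x y ∧ (G.neighborSet y).ncard = 1) ∨
    ((G.neighborSet x).ncard = 1 ∧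
      ∃ y c, G.Adj x y ∧ (G.neighborSet y).ncard = 2 ∧ G.Adj y c ∧ OnCycle G c)

/-- Vertex type of the unicyclic graph `G_g(s₁,t₁;…;s_g,t_g)`: the cycle vertices, the
vertices of the pendent paths of length 2, and the pendent vertices. -/
abbrev GgV (g : ℕ) (s t : Fin g → ℕ) : Type :=
  Fin g ⊕ ((Σ i : Fin g, Fin (s i) × Fin 2) ⊕ (Σ i : Fin g, Fin (t i)))

/-- The unicyclic graph `G_g(s₁,t₁;…;s_g,t_g)` obtained from a cycle `u_1 … u_g u_1` by
attaching `s i` pendent paths of length 2 and `t i` pendent edges at the vertex `u i`. -/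
def Gg (g : ℕ) [NeZero g] (s t : Fin g → ℕ) : SimpleGraph (GgV g s t) :=
  SimpleGraph.fromRel fun x y =>
    match x, y with
    | Sum.inl i, Sum.inl j => j = i + 1
    | Sum.inl i, Sum.inr (Sum.inl a) => a.1 = i ∧ a.2.2 = 0
    | Sum.inr (Sum.inl a), Sum.inr (Sum.inl b) => a.2.2 = 0 ∧ b = ⟨a.1, (a.2.1, 1)⟩
    | Sum.inl i, Sum.inr (Sum.inr b) => b.1 = i
    | _, _ => False

/-!
Eliminating the pendent vertices from `det (x I - Q)` by a Schur complement (scaled by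
`(x - 1) q`, `q = x² - 3x + 1`, to stay inside `ℝ[x]`) leaves a `3 × 3` determinant with constant
off-diagonal entries and diagonal entries `B - L i`, where `B = q (x² - 4x + 2)` and
`L i = (t i - 1) x q + s i x (x - 1) (x - 2)`. Moving the arms to `u₃` keeps `Σ L i`, so the
characteristic polynomials differ by `(x - 1)^(Σ (t i - 1)) (B e₂(L) - e₃(L)) / q³`. Every piece of
this expression has coefficients of alternating sign, which is `φ_i(G) ≥ φ_i(G')`; the
coefficients of `e₂(L)` are all zero only when at most one arm is non-trivial, i.e. when `G ≅ G'`.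
-/

namespace Polynomial

variable {R : Type*} [CommRing R] {p q : R[X]} {a b lo hi lo' hi' : ℕ}

lemma neg_one_pow_eq_of_modEq (h : a ≡ b [MOD 2]) : (-1 : R) ^ a = (-1) ^ b := by
  rw [neg_one_pow_eq_pow_mod_two, h, ← neg_one_pow_eq_pow_mod_two]

lemma neg_one_pow_mul_coeff_mul (p q : R[X]) (a b d : ℕ) :
    (-1 : R) ^ (a + b + d) * (p * q).coeff d =
      ∑ x ∈ Finset.HasAntidiagonal.antidiagonal d,
        ((-1) ^ (a + x.1) * p.coeff x.1) * ((-1) ^ (b + x.2) * q.coeff x.2) := by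
  rw [coeff_mul, Finset.mul_sum]
  refine Finset.sum_congr rfl fun x hx => ?_
  rw [← Finset.HasAntidiagonal.mem_antidiagonal.1 hx,
    show a + b + (x.1 + x.2) = (a + x.1) + (b + x.2) by ring, pow_add]
  ring

variable [LinearOrder R]

/-- For `a = n` and `p = Σ (-1) ^ i φ_i X ^ (n - i)` this says `φ_i ≥ 0` for all `i`. -/
def AltSigned (p : R[X]) (a : ℕ) : Prop :=
  ∀ d, 0 ≤ (-1 : R) ^ (a + d) * p.coeff d

def StrictAltSignedOn (p : R[X]) (a lo hi : ℕ) : Prop :=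
  p.AltSigned a ∧ lo ≤ hi ∧ ∀ d, lo ≤ d → d ≤ hi → 0 < (-1 : R) ^ (a + d) * p.coeff d

lemma AltSigned.of_modEq (h : a ≡ b [MOD 2]) (hp : p.AltSigned a) : p.AltSigned b := fun d => by
  rw [← neg_one_pow_eq_of_modEq (h.add_right d)]
  exact hp d

lemma AltSigned.neg (hp : p.AltSigned a) : (-p).AltSigned (a + 1) := fun d => by
  simpa [coeff_neg, add_right_comm a 1 d, pow_succ] using hp d

lemma StrictAltSignedOn.of_modEq (h : a ≡ b [MOD 2]) (hp : p.StrictAltSignedOn a lo hi) :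
    p.StrictAltSignedOn b lo hi := by
  refine ⟨hp.1.of_modEq h, hp.2.1, fun d hlo hhi => ?_⟩
  rw [← neg_one_pow_eq_of_modEq (h.add_right d)]
  exact hp.2.2 d hlo hhi

variable [IsStrictOrderedRing R]

namespace AltSigned

lemma add (hp : p.AltSigned a) (hq : q.AltSigned a) : (p + q).AltSigned a := fun d => by
  rw [coeff_add, mul_add]
  exact add_nonneg (hp d) (hq d)

lemma sub (hp : p.AltSigned a) (hq : q.AltSigned (a + 1)) : (p - q).AltSigned a := by
  simpa [sub_eq_add_neg] using hp.add (hq.neg.of_modEq (by unfold Nat.ModEq; omega))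

lemma mul (hp : p.AltSigned a) (hq : q.AltSigned b) : (p * q).AltSigned (a + b) := fun d => by
  rw [neg_one_pow_mul_coeff_mul]
  exact Finset.sum_nonneg fun x _ => mul_nonneg (hp x.1) (hq x.2)

lemma C_mul {c : R} (hc : 0 ≤ c) (hp : p.AltSigned a) : (C c * p).AltSigned a := fun d => by
  rw [coeff_C_mul, mul_left_comm]
  exact mul_nonneg hc (hp d)

lemma natCast_mul (c : ℕ) (hp : p.AltSigned a) : ((c : R[X]) * p).AltSigned a := by
  rw [← C_eq_natCast]
  exact hp.C_mul (Nat.cast_nonneg c)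

end AltSigned

namespace StrictAltSignedOn

lemma add (hp : p.StrictAltSignedOn a lo hi) (hq : q.AltSigned a) :
    (p + q).StrictAltSignedOn a lo hi := by
  refine ⟨hp.1.add hq, hp.2.1, fun d hlo hhi => ?_⟩
  rw [coeff_add, mul_add]
  exact add_pos_of_pos_of_nonneg (hp.2.2 d hlo hhi) (hq d)

lemma sub (hp : p.StrictAltSignedOn a lo hi) (hq : q.AltSigned (a + 1)) :
    (p - q).StrictAltSignedOn a lo hi := by
  simpa [sub_eq_add_neg] using hp.add (hq.neg.of_modEq (by unfold Nat.ModEq; omega))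

lemma mul (hp : p.StrictAltSignedOn a lo hi) (hq : q.StrictAltSignedOn b lo' hi') :
    (p * q).StrictAltSignedOn (a + b) (lo + lo') (hi + hi') := by
  obtain ⟨hp, hle, hpos⟩ := hp
  obtain ⟨hq, hle', hqos⟩ := hq
  refine ⟨hp.mul hq, by omega, fun d hlo hhi => ?_⟩
  obtain ⟨i, hid, hi₁, hi₂, hi₃, hi₄⟩ : ∃ i ≤ d, lo ≤ i ∧ i ≤ hi ∧ lo' ≤ d - i ∧ d - i ≤ hi' :=
    ⟨max lo (d - hi'), by omega, by omega, by omega, by omega, by omega⟩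
  rw [neg_one_pow_mul_coeff_mul]
  refine Finset.sum_pos' (fun x _ => mul_nonneg (hp x.1) (hq x.2))
    ⟨(i, d - i), Finset.HasAntidiagonal.mem_antidiagonal.2 (by omega), ?_⟩
  exact mul_pos (hpos i hi₁ hi₂) (hqos _ hi₃ hi₄)

lemma C_mul {c : R} (hc : 0 < c) (hp : p.StrictAltSignedOn a lo hi) :
    (C c * p).StrictAltSignedOn a lo hi := by
  refine ⟨hp.1.C_mul hc.le, hp.2.1, fun d hlo hhi => ?_⟩
  rw [coeff_C_mul, mul_left_comm]
  exact mul_pos hc (hp.2.2 d hlo hhi)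

lemma natCast_mul {c : ℕ} (hc : 0 < c) (hp : p.StrictAltSignedOn a lo hi) :
    ((c : R[X]) * p).StrictAltSignedOn a lo hi := by
  rw [← C_eq_natCast]
  exact hp.C_mul (Nat.cast_pos.2 hc)

end StrictAltSignedOn

lemma AltSigned.add_strictAltSignedOn (hp : p.AltSigned a) (hq : q.StrictAltSignedOn a lo hi) :
    (p + q).StrictAltSignedOn a lo hi :=
  add_comm q p ▸ hq.add hp

lemma strictAltSignedOn_X_pow (k : ℕ) : (X ^ k : R[X]).StrictAltSignedOn k k k := by
  refine ⟨fun d => ?_, le_rfl, fun d hlo hhi => ?_⟩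
  · rcases eq_or_ne d k with rfl | hd
    · simp [← two_mul]
    · simp [coeff_X_pow, hd]
  · obtain rfl : d = k := le_antisymm hhi hlo
    simp [← two_mul]

lemma StrictAltSignedOn.pow (hp : p.StrictAltSignedOn a lo hi) (n : ℕ) :
    (p ^ n).StrictAltSignedOn (n * a) (n * lo) (n * hi) := by
  induction n with
  | zero => simpa using strictAltSignedOn_X_pow (R := R) 0
  | succ n ih => simpa [pow_succ, add_mul] using ih.mul hp

lemma strictAltSignedOn_X_sub_C {c : R} (hc : 0 < c) : (X - C c).StrictAltSignedOn 1 0 1 := by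
  refine ⟨fun d => ?_, zero_le_one, fun d _ hd => ?_⟩
  · rcases d with _ | _ | d <;> simp [coeff_X, coeff_C, pow_succ, hc.le]
  · interval_cases d <;> simp [coeff_X, coeff_C, hc]

lemma strictAltSignedOn_X_sq_sub_C_mul_X_add_C {b c : R} (hb : 0 < b) (hc : 0 < c) :
    (X ^ 2 - C b * X + C c).StrictAltSignedOn 2 0 2 := by
  refine ⟨fun d => ?_, zero_le_two, fun d _ hd => ?_⟩
  · rcases d with _ | _ | _ | d <;> simp [coeff_X, coeff_C, pow_succ, hb.le, hc.le]
  · interval_cases d <;> simp [coeff_X, coeff_C, pow_succ, hb, hc]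

end Polynomial

lemma pow_sub_mul_mul_pow {M : Type*} [CommMonoidWithZero M] {x y : M} {n k : ℕ}
    (h : k ≤ n ∨ y = 0) : x ^ (n - k) * y * x ^ k = x ^ n * y := by
  rcases h with h | rfl
  · rw [mul_right_comm, ← pow_add, Nat.sub_add_cancel h]
  · simp

namespace Matrix

theorem det_fromBlocks_mul_pow_card {m n R : Type*} [Fintype m] [DecidableEq m]
    [Fintype n] [DecidableEq n] [CommRing R] (A : Matrix m m R) (B : Matrix m n R)
    (C : Matrix n m R) {D D' : Matrix n n R} {r : R} (hD : D * D' = r • 1) :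
    (fromBlocks A B C D).det * r ^ Fintype.card m = (r • A - B * (D' * C)).det * D.det := by
  have hU : (fromBlocks (r • 1) 0 (-(D' * C)) 1 : Matrix (m ⊕ n) (m ⊕ n) R).det =
      r ^ Fintype.card m := by
    rw [det_fromBlocks_zero₁₂, det_one, mul_one, det_smul, det_one, mul_one]
  have hprod : fromBlocks A B C D * fromBlocks (r • 1) 0 (-(D' * C)) 1 =
      fromBlocks (r • A - B * (D' * C)) B 0 D := by
    rw [fromBlocks_multiply, Matrix.mul_neg D, ← Matrix.mul_assoc D, hD]
    simp [sub_eq_add_neg]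
  rw [← hU, ← det_mul, hprod, det_fromBlocks_zero₂₁]

lemma det_fin_three_of_diag_const {R : Type*} [CommRing R] (d : Fin 3 → R) (c : R) :
    (of fun i j => if i = j then d i else c).det =
      d 0 * d 1 * d 2 - (d 0 + d 1 + d 2) * c ^ 2 + 2 * c ^ 3 := by
  simp [det_fin_three]
  ring

end Matrix

lemma SimpleGraph.ncard_neighborSet_eq_sum {V : Type*} [Fintype V] (G : SimpleGraph V) (x : V) :
    (G.neighborSet x).ncard = ∑ y, if G.Adj x y then 1 else 0 := by
  rw [Set.ncard_eq_toFinset_card', Finset.sum_boole, Nat.cast_id]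
  congr 1
  ext y
  simp

lemma charmatrix_sLap_apply {V : Type*} [Fintype V] [DecidableEq V] (G : SimpleGraph V)
    (x y : V) : charmatrix (sLap G) x y =
      if x = y then X - ((G.neighborSet x).ncard : ℝ[X]) else if G.Adj x y then -1 else 0 := by
  by_cases h : x = y
  · subst h; simp [sLap]
  · simp only [charmatrix_apply_ne _ _ _ h, sLap, of_apply, if_neg h, zero_add]
    split_ifs <;> simp

section Coefficients

variable {V W : Type*} [Fintype V] [DecidableEq V] [Fintype W] [DecidableEq W]
  {G : SimpleGraph V} {H : SimpleGraph W} {n : ℕ}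

lemma phi_sub_phi (hV : Fintype.card V = n) (hW : Fintype.card W = n) (i : ℕ) :
    phi G i - phi H i = (-1) ^ i * (QPoly G - QPoly H).coeff (n - i) := by
  rw [phi, phi, hV, hW, coeff_sub]
  ring

lemma neg_one_pow_add_sub {i : ℕ} (hi : i ≤ n) : (-1 : ℝ) ^ (n + (n - i)) = (-1) ^ i :=
  neg_one_pow_eq_of_modEq (by unfold Nat.ModEq; omega)

lemma phi_le_phi_of_altSigned (hV : Fintype.card V = n) (hW : Fintype.card W = n)
    (h : (QPoly G - QPoly H).AltSigned n) {i : ℕ} (hi : i ≤ n) : phi H i ≤ phi G i := by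
  have := h (n - i)
  rw [neg_one_pow_add_sub hi] at this
  linarith [phi_sub_phi (G := G) (H := H) hV hW i]

lemma phi_lt_phi_of_strictAltSignedOn {lo hi : ℕ} (hV : Fintype.card V = n)
    (hW : Fintype.card W = n) (h : (QPoly G - QPoly H).StrictAltSignedOn n lo hi) {i : ℕ}
    (hin : i ≤ n) (hlo : lo ≤ n - i) (hhi : n - i ≤ hi) : phi H i < phi G i := by
  have := h.2.2 (n - i) hlo hhi
  rw [neg_one_pow_add_sub hin] at this
  linarith [phi_sub_phi (G := G) (H := H) hV hW i]

end Coefficients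

namespace Gg

variable {g : ℕ} {s t : Fin g → ℕ}

-- `⟨i, (a, k)⟩` is vertex `k` of the `a`-th pendent path at `u i`; vertex `0` is adjacent to `u i`.
abbrev PathVert (s : Fin g → ℕ) : Type := Σ i : Fin g, Fin (s i) × Fin 2

abbrev LeafVert (t : Fin g → ℕ) : Type := Σ i : Fin g, Fin (t i)

def pathOf (p : PathVert s) : Σ i : Fin g, Fin (s i) := ⟨p.1, p.2.1⟩

section Adjacency

variable [NeZero g]

lemma adj_cycle_path (i : Fin g) (p : PathVert s) :
    (Gg g s t).Adj (.inl i) (.inr (.inl p)) ↔ p.1 = i ∧ p.2.2 = 0 := by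
  simp [Gg]

lemma adj_cycle_leaf (i : Fin g) (e : LeafVert t) :
    (Gg g s t).Adj (.inl i) (.inr (.inr e)) ↔ e.1 = i := by
  simp [Gg]

lemma adj_path_path (p q : PathVert s) :
    (Gg g s t).Adj (.inr (.inl p)) (.inr (.inl q)) ↔ p ≠ q ∧ pathOf p = pathOf q := by
  obtain ⟨i, a, k⟩ := p
  obtain ⟨j, b, l⟩ := q
  rcases eq_or_ne i j with rfl | hij
  · fin_cases k <;> fin_cases l <;> simp [Gg, pathOf, eq_comm]
  · simp [Gg, pathOf, hij, hij.symm]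

lemma not_adj_path_leaf (p : PathVert s) (e : LeafVert t) :
    ¬ (Gg g s t).Adj (.inr (.inl p)) (.inr (.inr e)) := by
  simp [Gg]

lemma not_adj_leaf_leaf (e f : LeafVert t) :
    ¬ (Gg g s t).Adj (.inr (.inr e)) (.inr (.inr f)) := by
  simp [Gg]

lemma neighborSet_leaf (e : LeafVert t) :
    (Gg g s t).neighborSet (.inr (.inr e)) = {.inl e.1} := by
  ext (j | q | f) <;>
    simp [(Gg g s t).adj_comm _ (.inl _), adj_cycle_leaf, eq_comm, not_adj_leaf_leaf,
      (Gg g s t).adj_comm _ (.inr (.inl _)), not_adj_path_leaf]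

lemma neighborSet_path_end (i : Fin g) (a : Fin (s i)) :
    (Gg g s t).neighborSet (.inr (.inl ⟨i, (a, 1)⟩)) = {.inr (.inl ⟨i, (a, 0)⟩)} := by
  ext (j | ⟨j, b, l⟩ | f)
  · simp [(Gg g s t).adj_comm _ (.inl _), adj_cycle_path]
  · rcases eq_or_ne i j with rfl | hij
    · fin_cases l <;> simp [adj_path_path, pathOf, eq_comm]
    · simp [adj_path_path, pathOf, hij, hij.symm]
  · simp [not_adj_path_leaf]

lemma neighborSet_path_middle (i : Fin g) (a : Fin (s i)) :
    (Gg g s t).neighborSet (.inr (.inl ⟨i, (a, 0)⟩)) =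
      {.inl i, .inr (.inl ⟨i, (a, 1)⟩)} := by
  ext (j | ⟨j, b, l⟩ | f)
  · simp [(Gg g s t).adj_comm _ (.inl _), adj_cycle_path, eq_comm]
  · rcases eq_or_ne i j with rfl | hij
    · fin_cases l <;> simp [adj_path_path, pathOf, eq_comm]
    · simp [adj_path_path, pathOf, hij, hij.symm]
  · simp [not_adj_path_leaf]

lemma ncard_neighborSet_path (p : PathVert s) :
    ((Gg g s t).neighborSet (.inr (.inl p))).ncard = if p.2.2 = 0 then 2 else 1 := by
  obtain ⟨i, a, k⟩ := p
  fin_cases k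
  · simp [neighborSet_path_middle]
  · simp [neighborSet_path_end]

lemma ncard_neighborSet_leaf (e : LeafVert t) :
    ((Gg g s t).neighborSet (.inr (.inr e))).ncard = 1 := by
  simp [neighborSet_leaf]

end Adjacency

lemma adj_cycle_cycle {s t : Fin 3 → ℕ} (i j : Fin 3) :
    (Gg 3 s t).Adj (.inl i) (.inl j) ↔ i ≠ j := by
  fin_cases i <;> fin_cases j <;> simp [Gg]

lemma ncard_neighborSet_cycle {s t : Fin 3 → ℕ} (i : Fin 3) :
    ((Gg 3 s t).neighborSet (.inl i)).ncard = 2 + s i + t i := by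
  rw [ncard_neighborSet_eq_sum]
  simp only [Fintype.sum_sum_type, adj_cycle_path, adj_cycle_leaf, adj_cycle_cycle,
    Fintype.sum_sigma, Fintype.sum_prod_type, Fin.sum_univ_two, Fin.sum_univ_three]
  fin_cases i <;> simp [add_assoc]

noncomputable def isoOfPerm {s t s' t' : Fin 3 → ℕ} (π : Equiv.Perm (Fin 3))
    (hs : ∀ i, s i = s' (π i)) (ht : ∀ i, t i = t' (π i)) : Gg 3 s t ≃g Gg 3 s' t' where
  toEquiv := Equiv.sumCongr π <| Equiv.sumCongr
    (Equiv.sigmaCongr π fun i => (finCongr (hs i)).prodCongr (Equiv.refl (Fin 2)))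
    (Equiv.sigmaCongr π fun i => finCongr (ht i))
  map_rel_iff' {x y} := by
    rcases x with i | p | ⟨i, a⟩ <;> rcases y with j | q | ⟨j, b⟩
    case inr.inl.inr.inl =>
      simp only [Equiv.sumCongr_apply, Sum.map_inr, Sum.map_inl]
      rw [adj_path_path, adj_path_path, Ne, Equiv.apply_eq_iff_eq]
      obtain ⟨i, a, k⟩ := p
      obtain ⟨j, b, l⟩ := q
      let e : (Σ i, Fin (s i)) ≃ Σ i, Fin (s' i) := Equiv.sigmaCongr π fun i => finCongr (hs i)
      exact and_congr_right' (e.apply_eq_iff_eq (x := ⟨i, a⟩) (y := ⟨j, b⟩))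
    all_goals
      try obtain ⟨i, a, k⟩ := p
      try obtain ⟨j, b, l⟩ := q
      simp [Equiv.sigmaCongr, adj_cycle_cycle, adj_cycle_path, adj_cycle_leaf,
        not_adj_path_leaf, not_adj_leaf_leaf, (Gg 3 _ _).adj_comm (.inr _) (.inl _),
        (Gg 3 _ _).adj_comm (.inr (.inr _)) (.inr (.inl _))]

lemma nonempty_iso_of_arms_eq_zero {s₁ s₂ s₃ a₁ a₂ a₃ : ℕ}
    (h : (s₁ + a₁) * (s₂ + a₂) + (s₁ + a₁) * (s₃ + a₃) + (s₂ + a₂) * (s₃ + a₃) = 0) :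
    Nonempty (Gg 3 ![s₁, s₂, s₃] ![1 + a₁, 1 + a₂, 1 + a₃] ≃g
      Gg 3 ![0, 0, s₁ + s₂ + s₃] ![1, 1, 1 + (a₁ + a₂ + a₃)]) := by
  simp only [Nat.add_eq_zero_iff, mul_eq_zero] at h
  obtain ⟨rfl, rfl, rfl, rfl⟩ | ⟨rfl, rfl, rfl, rfl⟩ | ⟨rfl, rfl, rfl, rfl⟩ :
      (s₁ = 0 ∧ a₁ = 0 ∧ s₂ = 0 ∧ a₂ = 0) ∨ (s₁ = 0 ∧ a₁ = 0 ∧ s₃ = 0 ∧ a₃ = 0) ∨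
        (s₂ = 0 ∧ a₂ = 0 ∧ s₃ = 0 ∧ a₃ = 0) := by omega
  · exact ⟨isoOfPerm 1 (fun i => by fin_cases i <;> simp) (fun i => by fin_cases i <;> simp)⟩
  · exact ⟨isoOfPerm (Equiv.swap 1 2) (fun i => by fin_cases i <;> simp [Equiv.swap_apply_def])
      (fun i => by fin_cases i <;> simp [Equiv.swap_apply_def])⟩
  · exact ⟨isoOfPerm (finRotate 3).symm (fun i => by fin_cases i <;> simp)
      (fun i => by fin_cases i <;> simp)⟩

noncomputable def pathPoly : ℝ[X] := X ^ 2 - 3 * X + 1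

noncomputable def pathCell : Matrix (Fin 2) (Fin 2) ℝ[X] := !![X - 2, -1; -1, X - 1]

lemma det_pathCell : pathCell.det = pathPoly := by
  rw [pathCell, det_fin_two_of, pathPoly]; ring

def pathEquiv (s : Fin g → ℕ) : Fin 2 × (Σ i : Fin g, Fin (s i)) ≃ PathVert s :=
  (Equiv.prodComm _ _).trans (Equiv.sigmaProdDistrib _ _)

lemma reindex_pathEquiv_blockDiagonal_apply (M : Matrix (Fin 2) (Fin 2) ℝ[X])
    (p q : PathVert s) :
    reindex (pathEquiv s) (pathEquiv s) (blockDiagonal fun _ => M) p q =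
      if pathOf p = pathOf q then M p.2.2 q.2.2 else 0 := by
  obtain ⟨i, a, k⟩ := p
  obtain ⟨j, b, l⟩ := q
  simp [pathEquiv, pathOf, blockDiagonal_apply, Equiv.sigmaProdDistrib]

noncomputable def pathBlock (s : Fin g → ℕ) : Matrix (PathVert s) (PathVert s) ℝ[X] :=
  reindex (pathEquiv s) (pathEquiv s) (blockDiagonal fun _ => pathCell)

noncomputable def pathBlockAdj (s : Fin g → ℕ) : Matrix (PathVert s) (PathVert s) ℝ[X] :=
  reindex (pathEquiv s) (pathEquiv s) (blockDiagonal fun _ => (X - 1 : ℝ[X]) • adjugate pathCell)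

lemma pathBlockAdj_apply (p q : PathVert s) :
    pathBlockAdj s p q =
      if pathOf p = pathOf q then ((X - 1 : ℝ[X]) • adjugate pathCell) p.2.2 q.2.2 else 0 :=
  reindex_pathEquiv_blockDiagonal_apply _ p q

noncomputable def pathAttach (s : Fin g → ℕ) : Matrix (Fin g) (PathVert s) ℝ[X] :=
  of fun i p => if p.1 = i ∧ p.2.2 = 0 then -1 else 0

noncomputable def leafAttach (t : Fin g → ℕ) : Matrix (Fin g) (LeafVert t) ℝ[X] :=
  of fun i e => if e.1 = i then -1 else 0

noncomputable def attachBlock (s t : Fin g → ℕ) :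
    Matrix (Fin g) (PathVert s ⊕ LeafVert t) ℝ[X] :=
  fromCols (pathAttach s) (leafAttach t)

noncomputable def treeBlock (s t : Fin g → ℕ) :
    Matrix (PathVert s ⊕ LeafVert t) (PathVert s ⊕ LeafVert t) ℝ[X] :=
  fromBlocks (pathBlock s) 0 0 ((X - 1 : ℝ[X]) • 1)

noncomputable def cycleBlock (s t : Fin 3 → ℕ) : Matrix (Fin 3) (Fin 3) ℝ[X] :=
  of fun i j => if i = j then X - ((2 + s i + t i : ℕ) : ℝ[X]) else -1

lemma charmatrix_sLap_eq_fromBlocks {s t : Fin 3 → ℕ} :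
    charmatrix (sLap (Gg 3 s t)) =
      fromBlocks (cycleBlock s t) (attachBlock s t) (attachBlock s t)ᵀ (treeBlock s t) := by
  refine Matrix.ext fun x y => ?_
  rcases x with i | p | e <;> rcases y with j | q | f <;>
    simp only [charmatrix_sLap_apply, fromBlocks_apply₁₁, fromBlocks_apply₁₂,
      fromBlocks_apply₂₁, fromBlocks_apply₂₂, attachBlock, treeBlock, transpose_apply,
      fromCols_apply_inl, fromCols_apply_inr, (Gg 3 s t).adj_comm (.inr _) (.inl _)]
  · by_cases h : i = j
    · subst h; simp [cycleBlock, ncard_neighborSet_cycle]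
    · simp [cycleBlock, adj_cycle_cycle, h]
  · simp [pathAttach, adj_cycle_path]
  · simp [leafAttach, adj_cycle_leaf]
  · simp [pathAttach, adj_cycle_path]
  · obtain ⟨i, a, k⟩ := p
    obtain ⟨j, b, l⟩ := q
    by_cases h : i = j
    · subst h
      fin_cases k <;> fin_cases l <;> by_cases hab : a = b <;>
        simp [pathBlock, reindex_pathEquiv_blockDiagonal_apply, adj_path_path,
          ncard_neighborSet_path, pathOf, pathCell, hab]
    · simp [pathBlock, reindex_pathEquiv_blockDiagonal_apply, adj_path_path, pathOf, h]
  · simp [not_adj_path_leaf]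
  · simp [leafAttach, adj_cycle_leaf]
  · simp [(Gg 3 s t).adj_comm (.inr (.inr _)), not_adj_path_leaf]
  · by_cases h : e = f
    · subst h; simp [ncard_neighborSet_leaf]
    · simp [not_adj_leaf_leaf, h]

noncomputable def schurScale : ℝ[X] := (X - 1) * pathPoly

lemma pathCell_mul_smul_adjugate : pathCell * ((X - 1 : ℝ[X]) • adjugate pathCell) = schurScale • 1 := by
  rw [Matrix.mul_smul, mul_adjugate, det_pathCell, smul_smul, schurScale]

lemma pathBlock_mul_pathBlockAdj : pathBlock s * pathBlockAdj s = schurScale • 1 := by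
  rw [pathBlock, pathBlockAdj, reindex_apply, reindex_apply, submatrix_mul_equiv,
    ← blockDiagonal_mul, pathCell_mul_smul_adjugate,
    show (fun _ => schurScale • 1 : (Σ i, Fin (s i)) → Matrix (Fin 2) (Fin 2) ℝ[X]) =
      schurScale • 1 from rfl,
    blockDiagonal_smul, blockDiagonal_one]
  ext p q
  simp [one_apply]

-- `(X - 1) • adjugate` instead of `adjugate` gives path and leaf blocks the common scale.
noncomputable def treeBlockAdj (s t : Fin g → ℕ) :
    Matrix (PathVert s ⊕ LeafVert t) (PathVert s ⊕ LeafVert t) ℝ[X] :=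
  fromBlocks (pathBlockAdj s) 0 0 (pathPoly • 1)

lemma treeBlock_mul_treeBlockAdj : treeBlock s t * treeBlockAdj s t = schurScale • 1 := by
  rw [treeBlock, treeBlockAdj, fromBlocks_multiply, pathBlock_mul_pathBlockAdj,
    ← fromBlocks_one, fromBlocks_smul]
  simp [schurScale, smul_smul, mul_comm]

lemma det_treeBlock :
    (treeBlock s t).det = pathPoly ^ (∑ i, s i) * (X - 1) ^ (∑ i, t i) := by
  rw [treeBlock, det_fromBlocks_zero₂₁, pathBlock, det_reindex_self, det_blockDiagonal]
  simp [det_pathCell]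

lemma pathAttach_mul_pathBlockAdj_mul_transpose :
    pathAttach s * (pathBlockAdj s * (pathAttach s)ᵀ) =
      diagonal fun i => (s i : ℝ[X]) * (X - 1) ^ 2 := by
  ext i j : 1
  rcases eq_or_ne i j with rfl | h
  · simp [pathAttach, pathBlockAdj_apply, mul_apply, Fintype.sum_sigma,
      Fintype.sum_prod_type, pathOf, pathCell, adjugate_fin_two_of, sq]
  · simp [pathAttach, pathBlockAdj_apply, mul_apply, Fintype.sum_sigma,
      Fintype.sum_prod_type, pathOf, h]

lemma leafAttach_mul_transpose :
    leafAttach t * (leafAttach t)ᵀ = diagonal fun i => (t i : ℝ[X]) := by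
  ext i j : 1
  rcases eq_or_ne i j with rfl | h
  · simp [leafAttach, mul_apply, Fintype.sum_sigma]
  · simp [leafAttach, mul_apply, Fintype.sum_sigma, h, h.symm]

lemma attachBlock_mul_treeBlockAdj_mul_transpose :
    attachBlock s t * (treeBlockAdj s t * (attachBlock s t)ᵀ) =
      diagonal fun i => (s i : ℝ[X]) * (X - 1) ^ 2 + (t i : ℝ[X]) * pathPoly := by
  rw [attachBlock, treeBlockAdj, transpose_fromCols, fromBlocks_mul_fromRows,
    fromCols_mul_fromRows]
  ext i j : 1
  by_cases h : i = j <;>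
    simp [pathAttach_mul_pathBlockAdj_mul_transpose, leafAttach_mul_transpose, h, mul_comm]

noncomputable def cycleEntry (s t : Fin 3 → ℕ) (i : Fin 3) : ℝ[X] :=
  (X - ((2 + s i + t i : ℕ) : ℝ[X])) * schurScale - (s i : ℝ[X]) * (X - 1) ^ 2 -
    (t i : ℝ[X]) * pathPoly

lemma scaledSchurComplement_eq {s t : Fin 3 → ℕ} :
    schurScale • cycleBlock s t - attachBlock s t * (treeBlockAdj s t * (attachBlock s t)ᵀ) =
      of fun i j => if i = j then cycleEntry s t i else -schurScale := by
  rw [attachBlock_mul_treeBlockAdj_mul_transpose]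
  ext i j : 1
  by_cases h : i = j
  · subst h; simp [cycleBlock, cycleEntry]; ring
  · simp [cycleBlock, h]

theorem charpoly_mul_schurScale_pow (s t : Fin 3 → ℕ) :
    (sLap (Gg 3 s t)).charpoly * schurScale ^ 3 =
      (cycleEntry s t 0 * cycleEntry s t 1 * cycleEntry s t 2 -
          (cycleEntry s t 0 + cycleEntry s t 1 + cycleEntry s t 2) * schurScale ^ 2 -
          2 * schurScale ^ 3) *
        (pathPoly ^ (∑ i, s i) * (X - 1) ^ (∑ i, t i)) := by
  have h := det_fromBlocks_mul_pow_card (cycleBlock s t) (attachBlock s t) (attachBlock s t)ᵀ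
    treeBlock_mul_treeBlockAdj
  rw [← charmatrix_sLap_eq_fromBlocks, Fintype.card_fin, scaledSchurComplement_eq,
    det_fin_three_of_diag_const, det_treeBlock] at h
  rw [Matrix.charpoly, h]
  ring

lemma schurScale_ne_zero : schurScale ≠ 0 :=
  mul_ne_zero (by simpa using X_sub_C_ne_zero (1 : ℝ))
    fun h => by simpa [pathPoly] using congrArg (eval 0) h

lemma cycleEntry_eq_sub (s t : Fin 3 → ℕ) (i : Fin 3) :
    cycleEntry s t i = pathPoly * (X ^ 2 - 4 * X + 2) - ((t i : ℝ[X]) - 1) * (X * pathPoly) -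
      (s i : ℝ[X]) * (X * (X - 1) * (X - 2)) := by
  simp only [cycleEntry, schurScale, pathPoly]
  push_cast
  ring

noncomputable def diffTerm (c d k : ℕ) : ℝ[X] :=
  X ^ 2 * ((X - 1) * (X - 2)) ^ k * ((c : ℝ[X]) * (X ^ 2 - 4 * X + 2) - (d : ℝ[X]) * X)

/- The `k`-th term collects the part of `B e₂(L) - e₃(L)` with `k` factors
`x (x - 1) (x - 2)`, divided by `q³`. Where the truncated exponent `s₁ + s₂ + s₃ - k` is wrong,
the term vanishes (`diffPoly_mul_pathPoly_pow`). -/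
noncomputable def diffPoly (s₁ s₂ s₃ a₁ a₂ a₃ : ℕ) : ℝ[X] :=
  pathPoly ^ (s₁ + s₂ + s₃) * diffTerm (a₁ * a₂ + a₁ * a₃ + a₂ * a₃) (a₁ * a₂ * a₃) 0 +
    pathPoly ^ (s₁ + s₂ + s₃ - 1) * diffTerm (s₁ * (a₂ + a₃) + s₂ * (a₁ + a₃) + s₃ * (a₁ + a₂))
      (s₁ * a₂ * a₃ + a₁ * s₂ * a₃ + a₁ * a₂ * s₃) 1 +
    pathPoly ^ (s₁ + s₂ + s₃ - 2) * diffTerm (s₁ * s₂ + s₁ * s₃ + s₂ * s₃)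
      (a₁ * s₂ * s₃ + s₁ * a₂ * s₃ + s₁ * s₂ * a₃) 2 +
    pathPoly ^ (s₁ + s₂ + s₃ - 3) * diffTerm 0 (s₁ * s₂ * s₃) 3

lemma diffPoly_mul_pathPoly_pow (s₁ s₂ s₃ a₁ a₂ a₃ : ℕ) :
    diffPoly s₁ s₂ s₃ a₁ a₂ a₃ * pathPoly ^ 3 = pathPoly ^ (s₁ + s₂ + s₃) *
      (pathPoly ^ 3 * diffTerm (a₁ * a₂ + a₁ * a₃ + a₂ * a₃) (a₁ * a₂ * a₃) 0 +
        pathPoly ^ 2 * diffTerm (s₁ * (a₂ + a₃) + s₂ * (a₁ + a₃) + s₃ * (a₁ + a₂))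
          (s₁ * a₂ * a₃ + a₁ * s₂ * a₃ + a₁ * a₂ * s₃) 1 +
        pathPoly * diffTerm (s₁ * s₂ + s₁ * s₃ + s₂ * s₃)
          (a₁ * s₂ * s₃ + s₁ * a₂ * s₃ + s₁ * s₂ * a₃) 2 +
        diffTerm 0 (s₁ * s₂ * s₃) 3) := by
  have h₁ : 1 ≤ s₁ + s₂ + s₃ ∨ diffTerm (s₁ * (a₂ + a₃) + s₂ * (a₁ + a₃) + s₃ * (a₁ + a₂))
      (s₁ * a₂ * a₃ + a₁ * s₂ * a₃ + a₁ * a₂ * s₃) 1 = 0 := by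
    by_contra! h
    obtain ⟨rfl, rfl, rfl⟩ : s₁ = 0 ∧ s₂ = 0 ∧ s₃ = 0 := by omega
    simp [diffTerm] at h
  have h₂ : 2 ≤ s₁ + s₂ + s₃ ∨ diffTerm (s₁ * s₂ + s₁ * s₃ + s₂ * s₃)
      (a₁ * s₂ * s₃ + s₁ * a₂ * s₃ + s₁ * s₂ * a₃) 2 = 0 := by
    by_contra! h
    obtain ⟨rfl, rfl⟩ | ⟨rfl, rfl⟩ | ⟨rfl, rfl⟩ :
      (s₁ = 0 ∧ s₂ = 0) ∨ (s₁ = 0 ∧ s₃ = 0) ∨ (s₂ = 0 ∧ s₃ = 0) := by omega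
    all_goals simp [diffTerm] at h
  have h₃ : 3 ≤ s₁ + s₂ + s₃ ∨ diffTerm 0 (s₁ * s₂ * s₃) 3 = 0 := by
    by_contra! h
    obtain rfl | rfl | rfl : s₁ = 0 ∨ s₂ = 0 ∨ s₃ = 0 := by omega
    all_goals simp [diffTerm] at h
  have e₁ := pow_sub_mul_mul_pow (x := pathPoly) h₁
  have e₂ := pow_sub_mul_mul_pow (x := pathPoly) h₂
  have e₃ := pow_sub_mul_mul_pow (x := pathPoly) h₃
  rw [diffPoly]
  linear_combination pathPoly ^ 2 * e₁ + pathPoly * e₂ + e₃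

theorem charpoly_sub_charpoly (s₁ s₂ s₃ a₁ a₂ a₃ : ℕ) :
    (sLap (Gg 3 ![s₁, s₂, s₃] ![1 + a₁, 1 + a₂, 1 + a₃])).charpoly -
        (sLap (Gg 3 ![0, 0, s₁ + s₂ + s₃] ![1, 1, 1 + (a₁ + a₂ + a₃)])).charpoly =
      (X - 1) ^ (a₁ + a₂ + a₃) * diffPoly s₁ s₂ s₃ a₁ a₂ a₃ := by
  have hG := charpoly_mul_schurScale_pow ![s₁, s₂, s₃] ![1 + a₁, 1 + a₂, 1 + a₃]
  have hG' := charpoly_mul_schurScale_pow ![0, 0, s₁ + s₂ + s₃] ![1, 1, 1 + (a₁ + a₂ + a₃)]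
  have hdiff := diffPoly_mul_pathPoly_pow s₁ s₂ s₃ a₁ a₂ a₃
  simp only [cycleEntry_eq_sub, Fin.sum_univ_three, cons_val_zero, cons_val_one, cons_val_two,
    head_cons, tail_cons, Nat.cast_add, Nat.cast_one, Nat.cast_zero] at hG hG'
  simp only [diffTerm] at hdiff
  push_cast at hdiff
  refine mul_right_cancel₀ (pow_ne_zero 3 schurScale_ne_zero) ?_
  rw [sub_mul, hG, hG', schurScale]
  linear_combination -(X - 1) ^ (a₁ + a₂ + a₃ + 3) * hdiff

lemma strictAltSignedOn_X_sq_mul_pow (k : ℕ) :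
    (X ^ 2 * ((X - 1) * (X - 2)) ^ k : ℝ[X]).StrictAltSignedOn (2 + 2 * k) 2 (2 + 2 * k) := by
  have h₁ : (X - 1 : ℝ[X]).StrictAltSignedOn 1 0 1 := by
    simpa using strictAltSignedOn_X_sub_C (R := ℝ) one_pos
  have h₂ : (X - 2 : ℝ[X]).StrictAltSignedOn 1 0 1 := by
    simpa [C_ofNat] using strictAltSignedOn_X_sub_C (R := ℝ) two_pos
  simpa [mul_comm k] using (strictAltSignedOn_X_pow 2).mul ((h₁.mul h₂).pow k)

lemma strictAltSignedOn_pathPoly : pathPoly.StrictAltSignedOn 2 0 2 := by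
  simpa [pathPoly, C_ofNat] using
    strictAltSignedOn_X_sq_sub_C_mul_X_add_C (R := ℝ) (b := 3) (c := 1) (by norm_num) one_pos

lemma strictAltSignedOn_X_sq_sub_four_mul_X_add_two :
    (X ^ 2 - 4 * X + 2 : ℝ[X]).StrictAltSignedOn 2 0 2 := by
  simpa [C_ofNat] using
    strictAltSignedOn_X_sq_sub_C_mul_X_add_C (R := ℝ) (b := 4) (c := 2) (by norm_num) two_pos

lemma altSigned_X_three : (X : ℝ[X]).AltSigned 3 := by
  simpa using (strictAltSignedOn_X_pow (R := ℝ) 1).1.of_modEq (show 1 ≡ 3 [MOD 2] from rfl)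

lemma altSigned_diffTerm (c d k : ℕ) : (diffTerm c d k).AltSigned (4 + 2 * k) := by
  have h := (strictAltSignedOn_X_sq_mul_pow k).1.mul
    ((strictAltSignedOn_X_sq_sub_four_mul_X_add_two.1.natCast_mul c).sub
      (altSigned_X_three.natCast_mul d))
  rwa [show 2 + 2 * k + 2 = 4 + 2 * k by ring] at h

lemma strictAltSignedOn_diffTerm {c : ℕ} (hc : 0 < c) (d k : ℕ) :
    (diffTerm c d k).StrictAltSignedOn (4 + 2 * k) 2 (4 + 2 * k) := by
  have h := (strictAltSignedOn_X_sq_mul_pow k).mul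
    ((strictAltSignedOn_X_sq_sub_four_mul_X_add_two.natCast_mul hc).sub
      (altSigned_X_three.natCast_mul d))
  rwa [show 2 + 2 * k + 2 = 4 + 2 * k by ring] at h

lemma altSigned_pathPoly_pow_mul_diffTerm (m c d k : ℕ) :
    (pathPoly ^ m * diffTerm c d k).AltSigned 0 :=
  ((strictAltSignedOn_pathPoly.pow m).1.mul (altSigned_diffTerm c d k)).of_modEq
    (by unfold Nat.ModEq; omega)

lemma strictAltSignedOn_pathPoly_pow_mul_diffTerm (m : ℕ) {c : ℕ} (hc : 0 < c) (d k : ℕ) :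
    (pathPoly ^ m * diffTerm c d k).StrictAltSignedOn 0 2 (2 * m + 4 + 2 * k) := by
  have h := (strictAltSignedOn_pathPoly.pow m).mul (strictAltSignedOn_diffTerm hc d k)
  rw [mul_zero, zero_add, mul_comm m, ← add_assoc] at h
  exact h.of_modEq (by unfold Nat.ModEq; omega)

lemma altSigned_diffPoly (s₁ s₂ s₃ a₁ a₂ a₃ : ℕ) :
    (diffPoly s₁ s₂ s₃ a₁ a₂ a₃).AltSigned 0 :=
  have alt := altSigned_pathPoly_pow_mul_diffTerm
  (((alt _ _ _ _).add (alt _ _ _ _)).add (alt _ _ _ _)).add (alt _ _ _ _)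

lemma strictAltSignedOn_diffPoly {s₁ s₂ s₃ a₁ a₂ a₃ : ℕ}
    (h : 0 < (s₁ + a₁) * (s₂ + a₂) + (s₁ + a₁) * (s₃ + a₃) + (s₂ + a₂) * (s₃ + a₃)) :
    (diffPoly s₁ s₂ s₃ a₁ a₂ a₃).StrictAltSignedOn 0 2 (2 * (s₁ + s₂ + s₃) + 4) := by
  have hsplit : (s₁ + a₁) * (s₂ + a₂) + (s₁ + a₁) * (s₃ + a₃) + (s₂ + a₂) * (s₃ + a₃) =
      (a₁ * a₂ + a₁ * a₃ + a₂ * a₃) + (s₁ * (a₂ + a₃) + s₂ * (a₁ + a₃) + s₃ * (a₁ + a₂)) +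
        (s₁ * s₂ + s₁ * s₃ + s₂ * s₃) := by ring
  have alt := altSigned_pathPoly_pow_mul_diffTerm
  rw [diffPoly]
  -- the term whose leading coefficient in `e₂(L)` is positive carries the strict sign pattern
  rcases Nat.eq_zero_or_pos (a₁ * a₂ + a₁ * a₃ + a₂ * a₃) with hα | hα
  swap
  · have h₀ := strictAltSignedOn_pathPoly_pow_mul_diffTerm (s₁ + s₂ + s₃) hα (a₁ * a₂ * a₃) 0
    exact ((h₀.add (alt _ _ _ _)).add (alt _ _ _ _)).add (alt _ _ _ _)
  rcases Nat.eq_zero_or_pos (s₁ * (a₂ + a₃) + s₂ * (a₁ + a₃) + s₃ * (a₁ + a₂)) with hβ | hβ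
  swap
  · have hS : 1 ≤ s₁ + s₂ + s₃ := by
      by_contra!
      obtain ⟨rfl, rfl, rfl⟩ : s₁ = 0 ∧ s₂ = 0 ∧ s₃ = 0 := by omega
      simp at hβ
    have h₁ := strictAltSignedOn_pathPoly_pow_mul_diffTerm (s₁ + s₂ + s₃ - 1) hβ
      (s₁ * a₂ * a₃ + a₁ * s₂ * a₃ + a₁ * a₂ * s₃) 1
    rw [show 2 * (s₁ + s₂ + s₃ - 1) + 4 + 2 * 1 = 2 * (s₁ + s₂ + s₃) + 4 by omega] at h₁
    exact (((alt _ _ _ _).add_strictAltSignedOn h₁).add (alt _ _ _ _)).add (alt _ _ _ _)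
  have hγ : 0 < s₁ * s₂ + s₁ * s₃ + s₂ * s₃ := by rwa [hsplit, hα, hβ, zero_add, zero_add] at h
  have hS : 2 ≤ s₁ + s₂ + s₃ := by
    by_contra!
    obtain ⟨rfl, rfl⟩ | ⟨rfl, rfl⟩ | ⟨rfl, rfl⟩ :
      (s₁ = 0 ∧ s₂ = 0) ∨ (s₁ = 0 ∧ s₃ = 0) ∨ (s₂ = 0 ∧ s₃ = 0) := by omega
    all_goals simp at hγ
  have h₂ := strictAltSignedOn_pathPoly_pow_mul_diffTerm (s₁ + s₂ + s₃ - 2) hγ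
    (a₁ * s₂ * s₃ + s₁ * a₂ * s₃ + s₁ * s₂ * a₃) 2
  rw [show 2 * (s₁ + s₂ + s₃ - 2) + 4 + 2 * 2 = 2 * (s₁ + s₂ + s₃) + 4 by omega] at h₂
  exact (((alt _ _ _ _).add (alt _ _ _ _)).add_strictAltSignedOn h₂).add (alt _ _ _ _)

end Gg

theorem signlessLaplacianCoeff_G3_moveToThird
    (s1 t1 s2 t2 s3 t3 n : ℕ) (ht1 : 1 ≤ t1) (ht2 : 1 ≤ t2) (ht3 : 1 ≤ t3)
    (hn : n = 3 + (2 * s1 + t1) + (2 * s2 + t2) + (2 * s3 + t3)) :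
    (∀ i ≤ n,
      phi (Gg 3 ![0, 0, s1 + s2 + s3] ![1, 1, t1 + t2 + t3 - 2]) i ≤
        phi (Gg 3 ![s1, s2, s3] ![t1, t2, t3]) i) ∧
    (¬ Nonempty ((Gg 3 ![s1, s2, s3] ![t1, t2, t3]) ≃g
        (Gg 3 ![0, 0, s1 + s2 + s3] ![1, 1, t1 + t2 + t3 - 2])) →
      ∀ i, 2 ≤ i → i ≤ n - 2 →
        phi (Gg 3 ![0, 0, s1 + s2 + s3] ![1, 1, t1 + t2 + t3 - 2]) i <
          phi (Gg 3 ![s1, s2, s3] ![t1, t2, t3]) i) := by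
  obtain ⟨a₁, rfl⟩ := Nat.exists_eq_add_of_le ht1
  obtain ⟨a₂, rfl⟩ := Nat.exists_eq_add_of_le ht2
  obtain ⟨a₃, rfl⟩ := Nat.exists_eq_add_of_le ht3
  rw [show 1 + a₁ + (1 + a₂) + (1 + a₃) - 2 = 1 + (a₁ + a₂ + a₃) by omega]
  have hV : Fintype.card (GgV 3 ![s1, s2, s3] ![1 + a₁, 1 + a₂, 1 + a₃]) = n := by
    simp [Fin.sum_univ_three, hn]; ring
  have hW : Fintype.card (GgV 3 ![0, 0, s1 + s2 + s3] ![1, 1, 1 + (a₁ + a₂ + a₃)]) = n := by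
    simp [Fin.sum_univ_three, hn]; ring
  have hsub := Gg.charpoly_sub_charpoly s1 s2 s3 a₁ a₂ a₃
  have hX := (strictAltSignedOn_X_sub_C (R := ℝ) one_pos).pow (a₁ + a₂ + a₃)
  simp only [map_one, mul_one, mul_zero] at hX
  constructor
  · refine fun i hi => phi_le_phi_of_altSigned hV hW ?_ hi
    rw [QPoly, QPoly, hsub]
    exact (hX.1.mul (Gg.altSigned_diffPoly s1 s2 s3 a₁ a₂ a₃)).of_modEq (by unfold Nat.ModEq; omega)
  · intro hiso i hi₂ hi
    have hpos : 0 < (s1 + a₁) * (s2 + a₂) + (s1 + a₁) * (s3 + a₃) + (s2 + a₂) * (s3 + a₃) :=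
      Nat.pos_of_ne_zero fun h => hiso (Gg.nonempty_iso_of_arms_eq_zero h)
    have hstrict := hX.mul (Gg.strictAltSignedOn_diffPoly hpos)
    rw [show a₁ + a₂ + a₃ + (2 * (s1 + s2 + s3) + 4) = n - 2 by omega] at hstrict
    refine phi_lt_phi_of_strictAltSignedOn (lo := 2) (hi := n - 2) hV hW ?_ (by omega) (by omega)
      (by omega)
    rw [QPoly, QPoly, hsub]
    exact hstrict.of_modEq (by unfold Nat.ModEq; omega)
end

section
/- Let H be a connected finite simple graph with |V(H)| ≥ 2, let v be a vertex of H, let k ≥ 0, and let G be the graph on n = |V(H)| + k vertices obtained from H by attaching k pendent vertices at v (i.e., adding k new vertices each adjacent only to v). Then Q_G(x) = (x−1)^k Q_H(x) − k x (x−1)^{k−1} Q_{H|v}(x). -/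
/-! Order the vertices of `G = addPendants H v k` as `V(H)` followed by the pendants. Then
`xI - Q(G)` has the block form `[[xI - Q(H) - k E_vv, -B], [-Bᵀ, (x - 1) I]]`, where `B` is the
incidence between `v` and the pendants. For `x ≠ 1` the Schur complement of the pendant block is
`xI - Q(H) - (k x / (x - 1)) E_vv`, and since the determinant is affine in the entry `(v, v)`,
its determinant is `Q_H(x) - (k x / (x - 1)) Q_{H|v}(x)`. Both sides of the identity are
polynomials agreeing at infinitely many points. -/

open Polynomial SimpleGraph Matrix

open scoped Classical

/-- `Q_{G|v}(x)`: the characteristic polynomial of the principal submatrix of `Q(G)`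
obtained by deleting the row and column corresponding to the vertex `v`. -/
noncomputable def QPolyDel {V : Type*} [Fintype V] [DecidableEq V] (G : SimpleGraph V)
    (v : V) : Polynomial ℝ :=
  ((sLap G).submatrix (fun x : {x : V // x ≠ v} => (x : V))
    (fun x : {x : V // x ≠ v} => (x : V))).charpoly

/-- The graph obtained from `H` by attaching `k` pendent vertices at the vertex `v`. -/
def addPendants {V : Type*} (H : SimpleGraph V) (v : V) (k : ℕ) :
    SimpleGraph (V ⊕ Fin k) :=
  SimpleGraph.fromRel fun x y =>
    match x, y with
    | Sum.inl a, Sum.inl b => H.Adj a b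
    | Sum.inl a, Sum.inr _ => a = v
    | _, _ => False

namespace Matrix

variable {n R : Type*} [Fintype n] [DecidableEq n] [CommRing R]

theorem det_updateRow_single_self (M : Matrix n n R) (i : n) :
    (M.updateRow i (Pi.single i 1)).det = (M.submatrix ((↑) : {j // j ≠ i} → n) (↑)).det := by
  let : Unique {j // ¬j ≠ i} := ⟨⟨⟨i, by simp⟩⟩, fun j => Subtype.ext (not_ne_iff.mp j.2)⟩
  have hcorner : ((M.updateRow i (Pi.single i 1)).toSquareBlockProp (¬· ≠ i)).det = 1 := by
    rw [det_unique]
    simp [toSquareBlockProp, toBlock, not_ne_iff.mp (default : {j // ¬j ≠ i}).2]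
  rw [twoBlockTriangular_det _ (· ≠ i) fun a ha b hb => by simp [not_ne_iff.mp ha, hb],
    hcorner, mul_one]
  congr 1
  ext a b
  simp [toSquareBlockProp, toBlock, updateRow_ne a.2]

theorem det_add_single_self (M : Matrix n n R) (i : n) (c : R) :
    (M + single i i c).det = M.det + c * (M.submatrix ((↑) : {j // j ≠ i} → n) (↑)).det := by
  have hrow : M + single i i c = M.updateRow i (M i + c • Pi.single i 1) := by
    ext a b
    rcases eq_or_ne a i with rfl | ha
    · simp [single, Pi.single_apply, eq_comm]
    · simp [updateRow_ne ha, single, Ne.symm ha]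
  rw [hrow, det_updateRow_add, updateRow_eq_self, det_updateRow_smul, det_updateRow_single_self]

theorem det_fromBlocks_smul_one₂₂ {m K : Type*} [Fintype m] [DecidableEq m] [Field K]
    (A : Matrix m m K) (B : Matrix m n K) (C : Matrix n m K) {c : K} (hc : c ≠ 0) :
    (fromBlocks A B C (c • 1)).det = c ^ Fintype.card n * (A - c⁻¹ • (B * C)).det := by
  let : Invertible (c • (1 : Matrix n n K)) :=
    ⟨c⁻¹ • 1, by simp [smul_smul, hc], by simp [smul_smul, hc]⟩
  rw [det_fromBlocks₂₂, det_smul, det_one, mul_one,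
    show ⅟(c • (1 : Matrix n n K)) = c⁻¹ • 1 from rfl, Matrix.mul_smul, Matrix.mul_one,
    Matrix.smul_mul]

end Matrix

section addPendants

variable {V : Type*} (H : SimpleGraph V) (v : V) (k : ℕ)

@[simp]
theorem addPendants_adj_inl_inl {a b : V} :
    (addPendants H v k).Adj (.inl a) (.inl b) ↔ H.Adj a b := by
  simp only [addPendants, fromRel_adj, ne_eq, Sum.inl.injEq]
  exact ⟨fun ⟨_, h⟩ => h.elim id Adj.symm, fun h => ⟨h.ne, .inl h⟩⟩

@[simp]
theorem addPendants_adj_inl_inr {a : V} {j : Fin k} :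
    (addPendants H v k).Adj (.inl a) (.inr j) ↔ a = v := by
  simp [addPendants]

@[simp]
theorem addPendants_adj_inr_inl {a : V} {j : Fin k} :
    (addPendants H v k).Adj (.inr j) (.inl a) ↔ a = v := by
  rw [adj_comm, addPendants_adj_inl_inr]

@[simp]
theorem not_addPendants_adj_inr_inr {i j : Fin k} :
    ¬(addPendants H v k).Adj (.inr i) (.inr j) := by
  simp [addPendants]

theorem neighborSet_addPendants_inl (a : V) :
    (addPendants H v k).neighborSet (.inl a) =
      Sum.inl '' H.neighborSet a ∪ if a = v then Set.range Sum.inr else ∅ := by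
  ext (b | j) <;> by_cases a = v <;> simp_all

theorem ncard_neighborSet_addPendants_inl [Finite V] (a : V) :
    ((addPendants H v k).neighborSet (.inl a)).ncard =
      (H.neighborSet a).ncard + if a = v then k else 0 := by
  rw [neighborSet_addPendants_inl, Set.ncard_union_eq,
    Set.ncard_image_of_injective _ Sum.inl_injective]
  · split_ifs <;> simp [← Set.image_univ, Set.ncard_image_of_injective _ Sum.inr_injective]
  · split_ifs <;> simp [Set.disjoint_left]

theorem neighborSet_addPendants_inr (j : Fin k) :
    (addPendants H v k).neighborSet (.inr j) = {.inl v} := by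
  ext (b | i) <;> simp [eq_comm]

def pendantIncidence [DecidableEq V] : Matrix V (Fin k) ℝ :=
  Matrix.of fun a _ => if a = v then 1 else 0

theorem pendantIncidence_mul_transpose [Fintype V] [DecidableEq V] :
    pendantIncidence v k * (pendantIncidence v k)ᵀ = single v v (k : ℝ) := by
  ext a b
  rcases eq_or_ne a v with rfl | ha
  · rcases eq_or_ne b a with rfl | hb
    · simp [pendantIncidence, mul_apply]
    · simp [pendantIncidence, mul_apply, hb, single_apply_of_col_ne _ _ hb.symm]
  · simp [pendantIncidence, mul_apply, ha, single_apply_of_row_ne ha.symm]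

theorem sLap_addPendants [Fintype V] [DecidableEq V] :
    sLap (addPendants H v k) =
      fromBlocks (sLap H + single v v (k : ℝ)) (pendantIncidence v k)
        (pendantIncidence v k)ᵀ 1 := by
  ext (a | i) (b | j)
  · rcases eq_or_ne a b with rfl | hab
    · rcases eq_or_ne a v with rfl | ha
      · simp [sLap, ncard_neighborSet_addPendants_inl]
      · simp [sLap, ncard_neighborSet_addPendants_inl, ha, single_apply_of_row_ne ha.symm]
    · simp [sLap, hab, single_apply_of_ne _ _ _ _ _ fun h => hab (h.1.symm.trans h.2)]
  · simp [sLap, pendantIncidence]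
  · simp [sLap, pendantIncidence]
  · rcases eq_or_ne i j with rfl | hij
    · simp [sLap, neighborSet_addPendants_inr]
    · simp [sLap, hij, one_apply_ne hij]

theorem eval_QPoly_addPendants [Fintype V] [DecidableEq V] {x : ℝ} (hx : x ≠ 1) :
    (QPoly (addPendants H v k)).eval x =
      (x - 1) ^ k * ((QPoly H).eval x - k * x / (x - 1) * (QPolyDel H v).eval x) := by
  have hx1 : x - 1 ≠ 0 := sub_ne_zero.mpr hx
  have hblocks : scalar (V ⊕ Fin k) x - sLap (addPendants H v k) =
      fromBlocks (scalar V x - (sLap H + single v v (k : ℝ))) (-pendantIncidence v k)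
        (-(pendantIncidence v k)ᵀ) ((x - 1) • 1) := by
    rw [sLap_addPendants]
    ext (a | i) (b | j) <;> simp [diagonal_apply, one_apply, apply_ite₂ (· - ·)]
  have hschur : scalar V x - (sLap H + single v v (k : ℝ)) -
      (x - 1)⁻¹ • (pendantIncidence v k * (pendantIncidence v k)ᵀ) =
      (scalar V x - sLap H) + single v v (-(k * x / (x - 1))) := by
    rw [pendantIncidence_mul_transpose]
    ext a b
    simp only [Matrix.sub_apply, Matrix.add_apply, Matrix.smul_apply, single_apply, smul_eq_mul]
    split_ifs
    · field_simp
      ring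
    · simp
  have hdel : (scalar V x - sLap H).submatrix ((↑) : {a // a ≠ v} → V) (↑) =
      scalar _ x - (sLap H).submatrix (↑) (↑) := by
    ext a b
    simp [diagonal_apply, Subtype.val_inj]
  rw [QPoly, eval_charpoly, hblocks, det_fromBlocks_smul_one₂₂ _ _ _ hx1, Matrix.neg_mul,
    Matrix.mul_neg, neg_neg, hschur, det_add_single_self, hdel, ← eval_charpoly, ← eval_charpoly,
    Fintype.card_fin, ← QPoly, ← QPolyDel]
  ring

end addPendants

theorem QPoly_addPendants_general {V : Type} [Fintype V] [DecidableEq V]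
    (H : SimpleGraph V) (v : V) (k : ℕ) :
    QPoly (addPendants H v k) =
      (X - 1) ^ k * QPoly H - (k : Polynomial ℝ) * X * (X - 1) ^ (k - 1) * QPolyDel H v := by
  refine Polynomial.eq_of_infinite_eval_eq _ _ <|
    (Set.finite_singleton (1 : ℝ)).infinite_compl.mono fun x (hx : x ≠ 1) => ?_
  rw [Set.mem_ofPred_eq, eval_QPoly_addPendants H v k hx]
  have hx1 : x - 1 ≠ 0 := sub_ne_zero.mpr hx
  rcases k with _ | k
  · simp
  · simp only [eval_sub, eval_mul, eval_pow, eval_X, eval_one, eval_natCast, Nat.add_sub_cancel]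
    field_simp
    ring

theorem QPoly_addPendants {V : Type} [Fintype V] [DecidableEq V]
    (H : SimpleGraph V) (hH : H.Connected) (hV : 2 ≤ Fintype.card V) (v : V) (k : ℕ) :
    QPoly (addPendants H v k) =
      (X - 1) ^ k * QPoly H - (k : Polynomial ℝ) * X * (X - 1) ^ (k - 1) * QPolyDel H v :=
  QPoly_addPendants_general H v k
end
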